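/- arXiv:0902.1284 — 4 statements merged into one kernel-verified Lean document; each statement's English description precedes it below -/
import Mathlib

section
/- Let d, m, k, s be positive integers, let δ ∈ (0,1), and let C > 0. Let A ∈ ℝ^{m×d} satisfy the (k+s, δ)-restricted isometry property. Let h ∈ ℝ^m, and suppose ŷ ∈ ℝ^d is s-sparse and satisfies ‖Aŷ − h‖₂² ≤ C·‖A y_{(1:k)} − h‖₂² for every y ∈ ℝ^d. Then for every y ∈ ℝ^d, ‖ŷ − y‖₂² ≤ C₁·‖Ay − h‖₂² + C₂·(‖y − y_{(1:k)}‖₂² + (1/k)·‖y − y_{(1:k)}‖₁²), where C₁ = 2(1+√C)²/(1−δ) and C₂ = 4(1 + (1+√C)/(1−δ))². -/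
open Real MeasureTheory ProbabilityTheory

/-- The Euclidean (ℓ₂) norm of a vector in `ℝ^n`. -/
noncomputable def l2 {n : ℕ} (v : Fin n → ℝ) : ℝ := Real.sqrt (∑ i, v i ^ 2)

/-- The ℓ₁ norm of a vector in `ℝ^n`. -/
def l1 {n : ℕ} (v : Fin n → ℝ) : ℝ := ∑ i, |v i|

/-- A vector is `k`-sparse if it has at most `k` nonzero entries. -/
def Sparse {n : ℕ} (k : ℕ) (v : Fin n → ℝ) : Prop :=
  (Finset.univ.filter fun i => v i ≠ 0).card ≤ k

/-- `(k,δ)`-restricted isometry property. -/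
def RIP {m d : ℕ} (k : ℕ) (δ : ℝ) (A : Matrix (Fin m) (Fin d) ℝ) : Prop :=
  ∀ x : Fin d → ℝ, Sparse k x →
    (1 - δ) * l2 x ^ 2 ≤ l2 (A.mulVec x) ^ 2 ∧ l2 (A.mulVec x) ^ 2 ≤ (1 + δ) * l2 x ^ 2

/-- `z` is a best `k`-sparse approximation `y_{(1:k)}` of `y`: it keeps the `k`
largest-magnitude coordinates of `y` (all coordinates if `k ≥ d`) and zeros the rest. -/
def IsBestApprox {d : ℕ} (k : ℕ) (y z : Fin d → ℝ) : Prop :=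
  ∃ S : Finset (Fin d), S.card = min k d ∧
    (∀ i ∈ S, ∀ j ∉ S, |y j| ≤ |y i|) ∧
    ∀ i, z i = if i ∈ S then y i else 0

/-!
Write `z = y_{(1:k)}`. As `ŷ - z` is `(k+s)`-sparse, the lower RIP bound and the near-optimality
of `ŷ` give `√(1-δ) ‖ŷ - z‖ ≤ ‖A(ŷ - z)‖ ≤ (1 + √C) ‖Az - h‖ ≤ (1 + √C) (‖Ay - h‖ + ‖A(y - z)‖)`.
The tail `y - z` is not sparse, but shelling it into blocks of `k` coordinates of decreasing
magnitude, each of whose entries is at most the average of the previous block, gives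
`‖Av‖ ≤ √(1+δ) (‖v‖₂ + ‖v‖₁ / √k)` for every `v`. Then `‖ŷ - y‖ ≤ ‖ŷ - z‖ + ‖y - z‖`, and
squaring with `(a + b)² ≤ 2 (a² + b²)` gives the constants.
-/

open Finset Matrix

section Norms

variable {n : ℕ}

lemma l2_eq_norm (v : Fin n → ℝ) : l2 v = ‖WithLp.toLp 2 v‖ := by
  rw [EuclideanSpace.norm_eq]
  simp [l2, sq_abs]

lemma l2_nonneg (v : Fin n → ℝ) : 0 ≤ l2 v := Real.sqrt_nonneg _

lemma l2_add_le (u v : Fin n → ℝ) : l2 (u + v) ≤ l2 u + l2 v := by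
  simpa only [l2_eq_norm, WithLp.toLp_add] using norm_add_le _ _

lemma l2_sub_le (u v : Fin n → ℝ) : l2 (u - v) ≤ l2 u + l2 v := by
  simpa only [l2_eq_norm, WithLp.toLp_sub] using norm_sub_le _ _

lemma l2_sub_comm (u v : Fin n → ℝ) : l2 (u - v) = l2 (v - u) := by
  simp only [l2_eq_norm, WithLp.toLp_sub, norm_sub_rev]

lemma l1_nonneg (v : Fin n → ℝ) : 0 ≤ l1 v := sum_nonneg fun _ _ => abs_nonneg _

lemma abs_indicator_le (s : Set (Fin n)) (v : Fin n → ℝ) (i : Fin n) :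
    |s.indicator v i| ≤ |v i| := by
  by_cases hi : i ∈ s <;> simp [hi]

lemma l2_indicator_le (s : Set (Fin n)) (v : Fin n → ℝ) : l2 (s.indicator v) ≤ l2 v :=
  Real.sqrt_le_sqrt <| sum_le_sum fun i _ => by
    simpa only [sq_abs] using pow_le_pow_left₀ (abs_nonneg _) (abs_indicator_le s v i) 2

lemma l1_eq_sum_add_l1_indicator_compl (T : Finset (Fin n)) (v : Fin n → ℝ) :
    l1 v = ∑ i ∈ T, |v i| + l1 ((↑Tᶜ : Set (Fin n)).indicator v) := by
  rw [l1, l1, ← sum_add_sum_compl T]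
  congr 1
  rw [← sum_indicator_subset _ (subset_univ Tᶜ)]
  refine sum_congr rfl fun i _ => ?_
  by_cases hi : i ∈ T <;> simp [hi]

end Norms

section Sparse

variable {n k l : ℕ}

lemma Sparse.mono {v : Fin n → ℝ} (hv : Sparse k v) (hkl : k ≤ l) : Sparse l v := hv.trans hkl

lemma sparse_card_of_support_subset {v : Fin n → ℝ} {T : Finset (Fin n)}
    (h : ∀ i, v i ≠ 0 → i ∈ T) : Sparse #T v :=
  card_le_card fun i hi => h i (mem_filter.1 hi).2

lemma sparse_indicator (T : Finset (Fin n)) (v : Fin n → ℝ) :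
    Sparse #T ((T : Set (Fin n)).indicator v) :=
  sparse_card_of_support_subset fun i hi => by
    by_contra h
    exact hi (Set.indicator_of_notMem h _)

lemma Sparse.sub {u v : Fin n → ℝ} (hu : Sparse k u) (hv : Sparse l v) : Sparse (k + l) (u - v) :=
  calc #{i | (u - v) i ≠ 0}
        ≤ #(({i | u i ≠ 0} : Finset (Fin n)) ∪ ({i | v i ≠ 0} : Finset (Fin n))) :=
        card_le_card fun i hi => by
          simp only [mem_filter, mem_union, mem_univ, true_and, Pi.sub_apply] at hi ⊢
          by_contra! hc
          exact hi (by rw [hc.1, hc.2, sub_zero])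
    _ ≤ #{i | u i ≠ 0} + #{i | v i ≠ 0} := card_union_le _ _
    _ ≤ k + l := add_le_add hu hv

lemma IsBestApprox.sparse {y z : Fin n → ℝ} (h : IsBestApprox k y z) : Sparse k z := by
  obtain ⟨S, hS, -, hz⟩ := h
  refine (sparse_card_of_support_subset (T := S) fun i hi => ?_).mono (hS ▸ min_le_left k n)
  by_contra hiS
  exact hi (by rw [hz, if_neg hiS])

lemma l2_le_sqrt_mul_of_abs_le {v : Fin n → ℝ} {t : ℝ} (hv : Sparse k v) (ht : 0 ≤ t)
    (hvt : ∀ i, |v i| ≤ t) : l2 v ≤ √k * t := by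
  have hsum : ∑ i, v i ^ 2 ≤ k * t ^ 2 :=
    calc ∑ i, v i ^ 2 = ∑ i with v i ≠ 0, v i ^ 2 :=
          (sum_filter_of_ne (p := fun i => v i ≠ 0) fun i _ h hv0 => h (by simp [hv0])).symm
      _ ≤ #{i | v i ≠ 0} • t ^ 2 := sum_le_card_nsmul _ _ _ fun i _ => by
          simpa only [sq_abs] using pow_le_pow_left₀ (abs_nonneg _) (hvt i) 2
      _ ≤ k * t ^ 2 := by
          rw [nsmul_eq_mul]
          gcongr
          exact_mod_cast hv
  calc l2 v ≤ √(k * t ^ 2) := Real.sqrt_le_sqrt hsum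
    _ = √k * t := by rw [Real.sqrt_mul (Nat.cast_nonneg k), Real.sqrt_sq ht]

end Sparse

section Shelling

variable {d : ℕ}

lemma exists_largest_coords (v : Fin d → ℝ) (k : ℕ) :
    ∃ T : Finset (Fin d), #T = min k d ∧ ∀ i ∈ T, ∀ j ∉ T, |v j| ≤ |v i| := by
  induction k with
  | zero => exact ⟨∅, by simp, by simp⟩
  | succ k ih =>
    obtain ⟨T, hTcard, hT⟩ := ih
    rcases le_or_gt d k with hdk | hkd
    · exact ⟨T, by omega, hT⟩
    · have hne : Tᶜ.Nonempty := by
        rw [← card_pos, card_compl, Fintype.card_fin]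
        omega
      obtain ⟨i₀, hi₀, hmax⟩ := exists_max_image Tᶜ (fun i => |v i|) hne
      have hi₀T : i₀ ∉ T := mem_compl.1 hi₀
      refine ⟨insert i₀ T, by rw [card_insert_of_notMem hi₀T]; omega, fun i hi j hj => ?_⟩
      have hjT : j ∉ T := fun h => hj (mem_insert_of_mem h)
      rcases mem_insert.1 hi with rfl | hiT
      · exact hmax j (mem_compl.2 hjT)
      · exact hT i hiT j hjT

lemma abs_le_sum_abs_div_card {T : Finset (Fin d)} {v : Fin d → ℝ}
    (hT : ∀ i ∈ T, ∀ j ∉ T, |v j| ≤ |v i|) (hne : T.Nonempty) {j : Fin d} (hj : j ∉ T) :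
    |v j| ≤ (∑ i ∈ T, |v i|) / #T := by
  rw [le_div_iff₀ (by exact_mod_cast hne.card_pos)]
  calc |v j| * #T = ∑ _i ∈ T, |v j| := by rw [sum_const, nsmul_eq_mul, mul_comm]
    _ ≤ ∑ i ∈ T, |v i| := sum_le_sum fun i hi => hT i hi j hj

lemma card_support_indicator_compl_lt {T : Finset (Fin d)} {v : Fin d → ℝ}
    (hT : ∀ i ∈ T, ∀ j ∉ T, |v j| ≤ |v i|) (hne : T.Nonempty) (hlt : #T < #{i | v i ≠ 0}) :
    #{i | (↑Tᶜ : Set (Fin d)).indicator v i ≠ 0} < #{i | v i ≠ 0} := by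
  obtain ⟨j, hj, hjT⟩ := exists_mem_notMem_of_card_lt_card hlt
  obtain ⟨i, hi⟩ := hne
  have hvi : v i ≠ 0 := fun h0 => (mem_filter.1 hj).2 <| abs_eq_zero.1 <|
    le_antisymm (by simpa [h0] using hT i hi j hjT) (abs_nonneg _)
  refine lt_of_le_of_lt (card_le_card fun l hl => ?_) (card_erase_lt_of_mem (a := i) (by simpa))
  have hl' := (mem_filter.1 hl).2
  have hlT : l ∉ T := fun h => hl' (Set.indicator_of_notMem (by simpa using h) _)
  rw [Set.indicator_of_mem (by simpa using hlT)] at hl'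
  exact mem_erase.2 ⟨fun h => hlT (h ▸ hi), mem_filter.2 ⟨mem_univ _, hl'⟩⟩

variable {m k : ℕ} {c : ℝ} {A : Matrix (Fin m) (Fin d) ℝ}

/-- Bounding the restrictions of `v` to `k` coordinates by an arbitrary `M` lets the induction
run on the tail left after removing the `k` largest coordinates, whose entries are at most the
average of the removed block. -/
theorem l2_mulVec_le_of_l2_indicator_le (hk : 0 < k) (hc : 0 ≤ c)
    (hA : ∀ x, Sparse k x → l2 (A *ᵥ x) ≤ c * l2 x) (v : Fin d → ℝ) (M : ℝ)
    (hM : ∀ T : Finset (Fin d), #T ≤ k → l2 ((T : Set (Fin d)).indicator v) ≤ M) :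
    l2 (A *ᵥ v) ≤ c * (M + l1 v / √k) := by
  induction hn : #{i | v i ≠ 0} using Nat.strong_induction_on generalizing v M with
  | _ n ih =>
  by_cases hv : Sparse k v
  · have hvM : l2 v ≤ M := by
      convert hM {i | v i ≠ 0} hv
      ext i
      by_cases h : v i = 0 <;> simp [h]
    calc l2 (A *ᵥ v) ≤ c * l2 v := hA v hv
      _ ≤ c * (M + l1 v / √k) := by
          gcongr
          linarith [div_nonneg (l1_nonneg v) (Real.sqrt_nonneg k)]
  · have hkd : k < d := (not_le.1 hv).trans_le (card_le_univ _ |>.trans_eq (Fintype.card_fin d))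
    obtain ⟨T, hTcard, hT⟩ := exists_largest_coords v k
    have hTk : #T = k := hTcard.trans (min_eq_left hkd.le)
    have hne : T.Nonempty := card_pos.1 (hTk ▸ hk)
    set head := (T : Set (Fin d)).indicator v with head_def
    set tail := (↑Tᶜ : Set (Fin d)).indicator v with tail_def
    set t := (∑ i ∈ T, |v i|) / k
    have hsplit : v = head + tail := by
      rw [head_def, tail_def, coe_compl, Set.indicator_self_add_compl]
    have hhead : l2 (A *ᵥ head) ≤ c * M :=
      (hA _ (hTk ▸ sparse_indicator T v)).trans (mul_le_mul_of_nonneg_left (hM T hTk.le) hc)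
    have htail_abs : ∀ i, |tail i| ≤ t := fun i => by
      by_cases hi : i ∈ T
      · rw [tail_def, Set.indicator_of_notMem (by simpa using hi), abs_zero]
        positivity
      · rw [tail_def, Set.indicator_of_mem (by simpa using hi)]
        simpa only [hTk] using abs_le_sum_abs_div_card hT hne hi
    have htail : l2 (A *ᵥ tail) ≤ c * (√k * t + l1 tail / √k) := by
      refine ih _ (hn ▸ card_support_indicator_compl_lt hT hne (hTk ▸ not_le.1 hv)) _ _
        (fun T' hT' => ?_) rfl
      exact l2_le_sqrt_mul_of_abs_le ((sparse_indicator T' tail).mono hT') (by positivity)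
        fun i => (abs_indicator_le _ _ i).trans (htail_abs i)
    have hsqrt : √k * t = (∑ i ∈ T, |v i|) / √k := by
      rw [mul_div_left_comm, Real.sqrt_div_self', mul_one_div]
    calc l2 (A *ᵥ v) ≤ l2 (A *ᵥ head) + l2 (A *ᵥ tail) := by
          rw [hsplit, mulVec_add]
          exact l2_add_le _ _
      _ ≤ c * M + c * (√k * t + l1 tail / √k) := add_le_add hhead htail
      _ = c * (M + l1 v / √k) := by
          rw [hsqrt, l1_eq_sum_add_l1_indicator_compl T v]
          ring

theorem l2_mulVec_le_l2_add_l1 (hk : 0 < k) (hc : 0 ≤ c)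
    (hA : ∀ x, Sparse k x → l2 (A *ᵥ x) ≤ c * l2 x) (v : Fin d → ℝ) :
    l2 (A *ᵥ v) ≤ c * (l2 v + l1 v / √k) :=
  l2_mulVec_le_of_l2_indicator_le hk hc hA v _ fun _ _ => l2_indicator_le _ v

end Shelling

lemma le_sqrt_mul_of_sq_le_mul {a b c : ℝ} (ha : 0 ≤ a) (hb : 0 ≤ b) (h : a ^ 2 ≤ c * b ^ 2) :
    a ≤ √c * b :=
  calc a = √(a ^ 2) := (Real.sqrt_sq ha).symm
    _ ≤ √(c * b ^ 2) := Real.sqrt_le_sqrt h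
    _ = √c * b := by rw [Real.sqrt_mul' _ (sq_nonneg b), Real.sqrt_sq hb]

lemma sqrt_mul_le_of_mul_sq_le {a b c : ℝ} (ha : 0 ≤ a) (hb : 0 ≤ b) (h : c * b ^ 2 ≤ a ^ 2) :
    √c * b ≤ a :=
  calc √c * b = √(c * b ^ 2) := by rw [Real.sqrt_mul' _ (sq_nonneg b), Real.sqrt_sq hb]
    _ ≤ √(a ^ 2) := Real.sqrt_le_sqrt h
    _ = a := Real.sqrt_sq ha

lemma sqrt_one_add_le_one_div_sqrt_one_sub {δ : ℝ} (hδ : δ < 1) : √(1 + δ) ≤ 1 / √(1 - δ) := by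
  rw [le_div_iff₀ (Real.sqrt_pos.2 (by linarith)), ← Real.sqrt_mul' _ (by linarith)]
  exact Real.sqrt_le_one.2 (by nlinarith [sq_nonneg δ])

namespace RIP

variable {m d k l : ℕ} {δ : ℝ} {A : Matrix (Fin m) (Fin d) ℝ}

lemma mono (hA : RIP k δ A) (hlk : l ≤ k) : RIP l δ A := fun x hx => hA x (hx.mono hlk)

lemma l2_mulVec_le (hA : RIP k δ A) {x : Fin d → ℝ} (hx : Sparse k x) :
    l2 (A *ᵥ x) ≤ √(1 + δ) * l2 x :=
  le_sqrt_mul_of_sq_le_mul (l2_nonneg _) (l2_nonneg _) (hA x hx).2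

lemma sqrt_mul_l2_le (hA : RIP k δ A) {x : Fin d → ℝ} (hx : Sparse k x) :
    √(1 - δ) * l2 x ≤ l2 (A *ᵥ x) :=
  sqrt_mul_le_of_mul_sq_le (l2_nonneg _) (l2_nonneg _) (hA x hx).1

theorem l2_sub_le_of_residual_le {s : ℕ} {C : ℝ} (hk : 0 < k) (hδ : δ < 1)
    (hA : RIP (k + s) δ A) {h : Fin m → ℝ} {yhat z : Fin d → ℝ} (hyhat : Sparse s yhat)
    (hz : Sparse k z) (hopt : l2 (A *ᵥ yhat - h) ≤ √C * l2 (A *ᵥ z - h)) (y : Fin d → ℝ) :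
    l2 (yhat - y) ≤ (1 + √C) / √(1 - δ) * l2 (A *ᵥ y - h) +
      (1 + (1 + √C) / (1 - δ)) * (l2 (y - z) + l1 (y - z) / √k) := by
  set r := l2 (y - z) + l1 (y - z) / √k
  set β := (1 + √C) / √(1 - δ)
  have hp : 0 < √(1 - δ) := Real.sqrt_pos.2 (by linarith)
  have hr : l2 (y - z) ≤ r := le_add_of_nonneg_right (div_nonneg (l1_nonneg _) (Real.sqrt_nonneg _))
  have hAyz : l2 (A *ᵥ (y - z)) ≤ √(1 + δ) * r :=
    l2_mulVec_le_l2_add_l1 hk (Real.sqrt_nonneg _)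
      (fun x hx => (hA.mono (Nat.le_add_right k s)).l2_mulVec_le hx) _
  have hres : l2 (A *ᵥ z - h) ≤ l2 (A *ᵥ y - h) + √(1 + δ) * r :=
    calc l2 (A *ᵥ z - h) = l2 ((A *ᵥ y - h) - A *ᵥ (y - z)) := by
          rw [mulVec_sub]
          congr 1
          abel
      _ ≤ l2 (A *ᵥ y - h) + √(1 + δ) * r := (l2_sub_le _ _).trans (add_le_add le_rfl hAyz)
  have hAdiff : √(1 - δ) * l2 (yhat - z) ≤ (1 + √C) * (l2 (A *ᵥ y - h) + √(1 + δ) * r) :=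
    calc √(1 - δ) * l2 (yhat - z) ≤ l2 (A *ᵥ (yhat - z)) :=
          hA.sqrt_mul_l2_le (by simpa only [add_comm] using hyhat.sub hz)
      _ = l2 ((A *ᵥ yhat - h) - (A *ᵥ z - h)) := by rw [mulVec_sub, sub_sub_sub_cancel_right]
      _ ≤ l2 (A *ᵥ yhat - h) + l2 (A *ᵥ z - h) := l2_sub_le _ _
      _ ≤ (1 + √C) * l2 (A *ᵥ z - h) := by linarith
      _ ≤ (1 + √C) * (l2 (A *ᵥ y - h) + √(1 + δ) * r) := by gcongr
  have hu : l2 (yhat - z) ≤ β * l2 (A *ᵥ y - h) + β * √(1 + δ) * r := by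
    rw [mul_assoc, ← mul_add, div_mul_eq_mul_div, le_div_iff₀' hp]
    exact hAdiff
  have hβ : β * √(1 + δ) ≤ (1 + √C) / (1 - δ) :=
    calc β * √(1 + δ) ≤ β * (1 / √(1 - δ)) := by
          gcongr
          exact sqrt_one_add_le_one_div_sqrt_one_sub hδ
      _ = (1 + √C) / (1 - δ) := by
          rw [div_mul_div_comm, mul_one, Real.mul_self_sqrt (by linarith)]
  calc l2 (yhat - y) ≤ l2 (yhat - z) + l2 (y - z) := by
        rw [l2_sub_comm y z, ← sub_add_sub_cancel yhat z y]
        exact l2_add_le _ _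
    _ ≤ β * l2 (A *ᵥ y - h) + (1 + (1 + √C) / (1 - δ)) * r := by
        linarith [mul_le_mul_of_nonneg_right hβ ((l2_nonneg _).trans hr)]

end RIP

theorem stmt_0_general {d m k s : ℕ} (hk : 0 < k)
    {δ C : ℝ} (hδ1 : δ < 1)
    (A : Matrix (Fin m) (Fin d) ℝ) (hA : RIP (k + s) δ A)
    (h : Fin m → ℝ) (yhat : Fin d → ℝ) (hyhat : Sparse s yhat)
    (hopt : ∀ y z : Fin d → ℝ, IsBestApprox k y z →
      l2 (A.mulVec yhat - h) ^ 2 ≤ C * l2 (A.mulVec z - h) ^ 2) :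
    ∀ y z : Fin d → ℝ, IsBestApprox k y z →
      l2 (yhat - y) ^ 2 ≤
        (2 * (1 + Real.sqrt C) ^ 2 / (1 - δ)) * l2 (A.mulVec y - h) ^ 2 +
        (4 * (1 + (1 + Real.sqrt C) / (1 - δ)) ^ 2) *
          (l2 (y - z) ^ 2 + (1 / (k : ℝ)) * l1 (y - z) ^ 2) := by
  intro y z hz
  have hbound := hA.l2_sub_le_of_residual_le hk hδ1 hyhat hz.sparse
    (le_sqrt_mul_of_sq_le_mul (l2_nonneg _) (l2_nonneg _) (hopt y z hz)) y
  set E := l2 (A *ᵥ y - h)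
  set P := l2 (y - z)
  set Q := l1 (y - z) / √k
  set γ := 1 + (1 + √C) / (1 - δ)
  have hQ : Q ^ 2 = 1 / (k : ℝ) * l1 (y - z) ^ 2 := by
    rw [div_pow, Real.sq_sqrt (Nat.cast_nonneg k), one_div_mul_eq_div]
  calc l2 (yhat - y) ^ 2 ≤ ((1 + √C) / √(1 - δ) * E + γ * (P + Q)) ^ 2 :=
        pow_le_pow_left₀ (l2_nonneg _) hbound 2
    _ ≤ 2 * (((1 + √C) / √(1 - δ) * E) ^ 2 + γ ^ 2 * (P + Q) ^ 2) := by
        rw [← mul_pow]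
        exact add_sq_le
    _ ≤ 2 * (((1 + √C) / √(1 - δ) * E) ^ 2 + γ ^ 2 * (2 * (P ^ 2 + Q ^ 2))) := by
        gcongr
        exact add_sq_le
    _ = 2 * (1 + √C) ^ 2 / (1 - δ) * E ^ 2 +
          4 * γ ^ 2 * (P ^ 2 + 1 / (k : ℝ) * l1 (y - z) ^ 2) := by
        rw [← hQ, mul_pow, div_pow, Real.sq_sqrt (by linarith)]
        ring

/-- Theorem 1, reconstruction guarantee under RIP. -/
theorem stmt_0 {d m k s : ℕ} (hd : 0 < d) (hm : 0 < m) (hk : 0 < k) (hs : 0 < s)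
    {δ C : ℝ} (hδ0 : 0 < δ) (hδ1 : δ < 1) (hC : 0 < C)
    (A : Matrix (Fin m) (Fin d) ℝ) (hA : RIP (k + s) δ A)
    (h : Fin m → ℝ) (yhat : Fin d → ℝ) (hyhat : Sparse s yhat)
    (hopt : ∀ y z : Fin d → ℝ, IsBestApprox k y z →
      l2 (A.mulVec yhat - h) ^ 2 ≤ C * l2 (A.mulVec z - h) ^ 2) :
    ∀ y z : Fin d → ℝ, IsBestApprox k y z →
      l2 (yhat - y) ^ 2 ≤
        (2 * (1 + Real.sqrt C) ^ 2 / (1 - δ)) * l2 (A.mulVec y - h) ^ 2 +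
        (4 * (1 + (1 + Real.sqrt C) / (1 - δ)) ^ 2) *
          (l2 (y - z) ^ 2 + (1 / (k : ℝ)) * l1 (y - z) ^ 2) :=
  stmt_0_general hk hδ1 A hA h yhat hyhat hopt
end

section
/- Let A = [a₁ | … | a_d] ∈ ℝ^{m×d} have unit ℓ₂-norm columns, let h ∈ ℝ^m, and let k be a positive integer. Suppose r^{(0)}, r^{(1)}, …, r^{(k)} ∈ ℝ^m and indices j₀, …, j_{k−1} ∈ {1,…,d} satisfy r^{(0)} = h and, for each 0 ≤ i < k, ‖r^{(i+1)}‖₂ ≤ ‖r^{(i)} − (a_{j_i}ᵀ r^{(i)})·a_{j_i}‖₂ (as holds for the residuals of Orthogonal Matching Pursuit, where r^{(i+1)} is the residual after least-squares fitting of h on the columns selected through step i). Then there exists some 0 ≤ i < k such that (a_{j_i}ᵀ r^{(i)})² ≤ ‖h‖₂²/k. -/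
open Real MeasureTheory ProbabilityTheory

/-! As the columns of `A` are unit vectors, Pythagoras shows that step `i` lowers `‖r‖²` by at
least `(a_{j_i}ᵀ r⁽ⁱ⁾)²`. These `k` gains telescope to at most `‖r⁽⁰⁾‖² = ‖h‖²`, so the smallest
of them is at most `‖h‖² / k`. -/

open Finset

lemma l2_sq {n : ℕ} (v : Fin n → ℝ) : l2 v ^ 2 = ∑ i, v i ^ 2 :=
  Real.sq_sqrt (by positivity)

lemma l2_sub_proj_sq {n : ℕ} {a : Fin n → ℝ} (ha : l2 a = 1) (r : Fin n → ℝ) :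
    l2 (fun l => r l - (∑ l', a l' * r l') * a l) ^ 2 = l2 r ^ 2 - (∑ l, a l * r l) ^ 2 := by
  have ha2 : ∑ l, a l ^ 2 = 1 := by rw [← l2_sq, ha, one_pow]
  set s := ∑ l, a l * r l
  calc l2 (fun l => r l - s * a l) ^ 2
      = ∑ l, r l ^ 2 - 2 * s * ∑ l, a l * r l + s ^ 2 * ∑ l, a l ^ 2 := by
        simp only [l2_sq, mul_sum, ← sum_sub_distrib, ← sum_add_distrib]
        exact sum_congr rfl fun l _ => by ring
    _ = l2 r ^ 2 - s ^ 2 := by rw [ha2, l2_sq]; ring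

lemma sum_range_le_of_le_sub {e c : ℕ → ℝ} {k : ℕ} (hstep : ∀ i < k, e (i + 1) ≤ e i - c i)
    (hek : 0 ≤ e k) : ∑ i ∈ range k, c i ≤ e 0 :=
  calc ∑ i ∈ range k, c i ≤ ∑ i ∈ range k, (e i - e (i + 1)) :=
        sum_le_sum fun i hi => by linarith [hstep i (mem_range.mp hi)]
    _ = e 0 - e k := sum_range_sub' e k
    _ ≤ e 0 := by linarith

lemma exists_lt_le_div_of_sum_range_le {c : ℕ → ℝ} {k : ℕ} (hk : 0 < k) {B : ℝ}
    (hsum : ∑ i ∈ range k, c i ≤ B) : ∃ i < k, c i ≤ B / k := by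
  have hconst : ∑ i ∈ range k, c i ≤ ∑ _i ∈ range k, B / k := by
    rw [sum_const, card_range, nsmul_eq_mul, mul_div_cancel₀ B (by positivity)]
    exact hsum
  obtain ⟨i, hi, hci⟩ := exists_le_of_sum_le (nonempty_range_iff.mpr hk.ne') hconst
  exact ⟨i, mem_range.mp hi, hci⟩

/-- Lemma 1, some OMP step makes small progress. -/
theorem stmt_4 {m d k : ℕ} (hk : 0 < k)
    (A : Matrix (Fin m) (Fin d) ℝ) (h : Fin m → ℝ)
    (hcols : ∀ j : Fin d, l2 (fun i => A i j) = 1)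
    (r : ℕ → Fin m → ℝ) (j : ℕ → Fin d)
    (hr0 : r 0 = h)
    (hstep : ∀ i < k,
      l2 (r (i + 1)) ≤
        l2 (fun l => r i l - (∑ l', A l' (j i) * r i l') * A l (j i))) :
    ∃ i < k, (∑ l, A l (j i) * r i l) ^ 2 ≤ l2 h ^ 2 / k := by
  have hdecrease : ∀ i < k,
      l2 (r (i + 1)) ^ 2 ≤ l2 (r i) ^ 2 - (∑ l, A l (j i) * r i l) ^ 2 := fun i hi => by
    rw [← l2_sub_proj_sq (hcols (j i))]
    exact pow_le_pow_left₀ (Real.sqrt_nonneg _) (hstep i hi) 2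
  have hsum := sum_range_le_of_le_sub (e := fun i => l2 (r i) ^ 2) hdecrease (sq_nonneg _)
  rw [hr0] at hsum
  exact exists_lt_le_div_of_sum_range_le hk hsum
end

section
/- Fix real numbers λ₁ ≥ λ₂ ≥ … ≥ λ_D > 0, and let X₁, …, X_D be i.i.d. chi-squared random variables with one degree of freedom (i.e., X_i = Z_i² where Z₁,…,Z_D are i.i.d. standard Gaussian). Then for any 0 < γ < 1, Pr[ Σ_{i=1}^D λ_i X_i > (1 + γ)·Σ_{i=1}^D λ_i ] ≤ exp( −(D γ²/24)·(λ̄/λ₁) ), where λ̄ = (λ₁ + … + λ_D)/D. -/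
open Real MeasureTheory ProbabilityTheory

lemma integral_exp_mul_sq_gaussianReal {c : ℝ} (hc : c < 1 / 2) :
    ∫ x, exp (c * x ^ 2) ∂gaussianReal 0 1 = (√(1 - 2 * c))⁻¹ := by
  have hdensity : ∀ x : ℝ, gaussianPDFReal 0 1 x • exp (c * x ^ 2)
      = (√(2 * π))⁻¹ * exp (-(1 / 2 - c) * x ^ 2) := by
    intro x
    simp only [gaussianPDFReal, NNReal.coe_one, mul_one, sub_zero, smul_eq_mul]
    rw [mul_assoc, ← exp_add]
    ring_nf
  have hb : 0 < 1 / 2 - c := by linarith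
  rw [integral_gaussianReal_eq_integral_smul one_ne_zero]
  simp_rw [hdensity]
  rw [integral_const_mul, integral_gaussian, ← sqrt_inv, ← sqrt_mul (by positivity),
    ← sqrt_inv]
  congr 1
  field_simp

lemma mgf_const_mul_sq_of_map_eq_gaussianReal {Ω : Type*} {mΩ : MeasurableSpace Ω}
    {μ : Measure Ω} {Z : Ω → ℝ} (hZ : AEMeasurable Z μ) (hlaw : μ.map Z = gaussianReal 0 1)
    (a : ℝ) {t : ℝ} (ht : t * a < 1 / 2) :
    mgf (fun ω ↦ a * Z ω ^ 2) μ t = (√(1 - 2 * (t * a)))⁻¹ := by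
  rw [show (fun ω ↦ a * Z ω ^ 2) = (fun x ↦ a * x ^ 2) ∘ Z from rfl,
    ← mgf_map hZ (by fun_prop), hlaw, mgf]
  conv_lhs => simp only [Function.comp_apply, ← mul_assoc]
  exact integral_exp_mul_sq_gaussianReal ht

lemma inv_sqrt_one_sub_le_exp {u : ℝ} (hu : u ≤ 1 / 2) :
    (√(1 - u))⁻¹ ≤ exp (u / 2 + u ^ 2) := by
  have h1 : 0 < 1 - u := by linarith
  have hlog : -log (1 - u) ≤ u + 2 * u ^ 2 :=
    calc -log (1 - u) = log (1 - u)⁻¹ := (log_inv _).symm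
      _ ≤ (1 - u)⁻¹ - 1 := log_le_sub_one_of_pos (inv_pos.mpr h1)
      _ ≤ u + 2 * u ^ 2 := by
        rw [inv_eq_one_div, div_sub_one h1.ne', div_le_iff₀ h1]
        nlinarith [mul_nonneg (sq_nonneg u) (by linarith : (0 : ℝ) ≤ 1 - 2 * u)]
  rw [sqrt_eq_rpow, rpow_def_of_pos h1, ← exp_neg, exp_le_exp]
  linarith

theorem measureReal_ge_sum_mul_sq_le_exp {ι : Type*} [Fintype ι] {Ω : Type*}
    {mΩ : MeasurableSpace Ω} {μ : Measure Ω} {Z : ι → Ω → ℝ} (hmeas : ∀ i, Measurable (Z i))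
    (hindep : iIndepFun Z μ) (hlaw : ∀ i, μ.map (Z i) = gaussianReal 0 1) (a : ι → ℝ) {t : ℝ}
    (ht : 0 ≤ t) (hta : ∀ i, 4 * (t * a i) ≤ 1) (ε : ℝ) :
    μ.real {ω | ε ≤ ∑ i, a i * Z i ω ^ 2} ≤
      exp (-t * ε + ∑ i, (t * a i + 4 * (t * a i) ^ 2)) := by
  have := hindep.isProbabilityMeasure
  set X : ι → Ω → ℝ := fun i ω ↦ a i * Z i ω ^ 2
  have hXmeas : ∀ i, Measurable (X i) := fun i ↦ by fun_prop
  have hXindep : iIndepFun X μ := hindep.comp (fun i x ↦ a i * x ^ 2) (fun i ↦ by fun_prop)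
  have hmgf : ∀ i, mgf (X i) μ t = (√(1 - 2 * (t * a i)))⁻¹ := fun i ↦
    mgf_const_mul_sq_of_map_eq_gaussianReal (hmeas i).aemeasurable (hlaw i) (a i)
      (by linarith [hta i])
  have hint : ∀ i, Integrable (fun ω ↦ exp (t * X i ω)) μ := fun i ↦ by
    rw [← mgf_pos_iff, hmgf i]
    exact inv_pos.mpr (sqrt_pos.mpr (by linarith [hta i]))
  have hmgf_le : ∀ i, mgf (X i) μ t ≤ exp (t * a i + 4 * (t * a i) ^ 2) := fun i ↦ by
    rw [hmgf i]
    convert inv_sqrt_one_sub_le_exp (u := 2 * (t * a i)) (by linarith [hta i]) using 2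
    ring
  have hchernoff := measure_ge_le_exp_mul_mgf ε ht
    (hXindep.integrable_exp_mul_sum hXmeas (s := Finset.univ) fun i _ ↦ hint i)
  simp only [Finset.sum_apply, hXindep.mgf_sum hXmeas] at hchernoff
  calc μ.real {ω | ε ≤ ∑ i, a i * Z i ω ^ 2}
      ≤ exp (-t * ε) * ∏ i, mgf (X i) μ t := hchernoff
    _ ≤ exp (-t * ε) * ∏ i, exp (t * a i + 4 * (t * a i) ^ 2) := by
      gcongr with i
      · exact fun i _ ↦ mgf_nonneg
      · exact hmgf_le i
    _ = exp (-t * ε + ∑ i, (t * a i + 4 * (t * a i) ^ 2)) := by rw [exp_add, exp_sum]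

/-- Lemma 4, Chernoff bound for weighted sums of χ² variables.
The χ² variables are `X i = (Z i)²` for i.i.d. standard Gaussians `Z i`. -/
theorem stmt_6 {D : ℕ} (hD : 0 < D)
    (lam : Fin D → ℝ) (hpos : ∀ i, 0 < lam i)
    (hsorted : ∀ i j : Fin D, i ≤ j → lam j ≤ lam i)
    {Ω : Type*} [MeasureSpace Ω] [IsProbabilityMeasure (ℙ : Measure Ω)]
    (Z : Fin D → Ω → ℝ)
    (hZmeas : ∀ i, Measurable (Z i))
    (hZindep : iIndepFun Z ℙ)
    (hZlaw : ∀ i, Measure.map (Z i) ℙ = gaussianReal 0 1)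
    (γ : ℝ) (hγ0 : 0 < γ) (hγ1 : γ < 1) :
    (ℙ {ω | (1 + γ) * ∑ i, lam i < ∑ i, lam i * (Z i ω) ^ 2}).toReal ≤
      Real.exp (-((D : ℝ) * γ ^ 2 / 24) *
        (((∑ i, lam i) / (D : ℝ)) / lam ⟨0, hD⟩)) := by
  set L := lam ⟨0, hD⟩
  set Λ := ∑ i, lam i
  set t := γ / (6 * L)
  have hL : 0 < L := hpos _
  have ht : 0 < t := by positivity
  have hΛ : 0 < Λ := Finset.sum_pos (fun i _ ↦ hpos i) ⟨_, Finset.mem_univ ⟨0, hD⟩⟩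
  have htL : t * L = γ / 6 := by simp only [t]; field_simp
  have hta : ∀ i, t * lam i ≤ γ / 6 := fun i ↦
    htL ▸ by gcongr; exact hsorted _ i (Nat.zero_le _)
  have hsq : ∑ i, (t * lam i) ^ 2 ≤ γ / 6 * (t * Λ) := by
    rw [Finset.mul_sum, Finset.mul_sum]
    gcongr with i
    nlinarith [hta i, mul_pos ht (hpos i)]
  have hrate : -((D : ℝ) * γ ^ 2 / 24) * ((Λ / (D : ℝ)) / L) = -(t * γ * Λ) / 4 := by
    simp only [t]
    field_simp
    norm_num
  calc (ℙ {ω | (1 + γ) * Λ < ∑ i, lam i * Z i ω ^ 2}).toReal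
      ≤ (ℙ : Measure Ω).real {ω | (1 + γ) * Λ ≤ ∑ i, lam i * Z i ω ^ 2} :=
        measureReal_mono (Set.ofPred_subset_ofPred.mpr fun _ ↦ le_of_lt) (measure_ne_top _ _)
    _ ≤ exp (-t * ((1 + γ) * Λ) + ∑ i, (t * lam i + 4 * (t * lam i) ^ 2)) :=
        measureReal_ge_sum_mul_sq_le_exp hZmeas hZindep hZlaw lam ht.le
          (fun i ↦ by linarith [hta i]) _
    _ ≤ exp (-((D : ℝ) * γ ^ 2 / 24) * ((Λ / (D : ℝ)) / L)) := by
      rw [exp_le_exp, hrate, Finset.sum_add_distrib, ← Finset.mul_sum, ← Finset.mul_sum]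
      linarith [mul_pos (mul_pos ht hγ0) hΛ]
end

section
/- Let m, d be positive integers, let (θ_{ij})_{1 ≤ i ≤ m, 1 ≤ j ≤ d} be i.i.d. standard Gaussian random variables, and let λ₁, …, λ_d ≥ 0 with Σ_j λ_j > 0. Then for any 0 < t < 1, Pr[ (1/m)·Σ_{i=1}^m Σ_{j=1}^d λ_j θ_{ij}² > (1 + t)·Σ_{j=1}^d λ_j ] ≤ exp(−m t²/24). -/
/-!
Chernoff's method. Normalise the weights to `w_{ij} = λ_j / ∑ λ`, which lie in `[0, 1]` and sum
to `m`. For a standard Gaussian `θ`, `E exp (c θ²) = (1 - 2c)^{-1/2}`; at `s = t / (2(1+t))`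
Bernoulli's inequality `(1+t)^{-w} ≤ 1 - w t / (1+t)` bounds the moment generating function of
`w θ²` by `(1+t)^{w/2}`. Independence multiplies these into `(1+t)^{m/2}`, so the tail is at most
`exp (-m (t - log (1+t)) / 2)`, and `log (1+t) ≤ t - t²/12` on `[0, 1]` finishes.
-/

open Real MeasureTheory ProbabilityTheory

lemma gaussianPDFReal_zero_one_mul_exp_mul_sq (c x : ℝ) :
    gaussianPDFReal 0 1 x * exp (c * x ^ 2) = (√(2 * π))⁻¹ * exp (-(1 / 2 - c) * x ^ 2) := by
  rw [gaussianPDFReal, mul_assoc, ← exp_add]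
  push_cast
  ring_nf

/-- For `1 / 2 ≤ c` both sides are `0`: the integral by non-integrability, the square root by
truncation. -/
lemma mgf_sq_gaussianReal (c : ℝ) :
    mgf (fun x ↦ x ^ 2) (gaussianReal 0 1) c = (√(1 - 2 * c))⁻¹ := by
  simp_rw [mgf, integral_gaussianReal_eq_integral_smul one_ne_zero, smul_eq_mul,
    gaussianPDFReal_zero_one_mul_exp_mul_sq, integral_const_mul, integral_gaussian]
  rw [← sqrt_inv, ← sqrt_mul (by positivity), ← sqrt_inv]
  congr 1
  field_simp

section
variable {Ω : Type*} [MeasurableSpace Ω] {μ : Measure Ω} {X : Ω → ℝ}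

lemma mgf_sq_of_map_eq_gaussianReal (hX : AEMeasurable X μ) (hlaw : μ.map X = gaussianReal 0 1)
    (c : ℝ) : mgf (fun ω ↦ X ω ^ 2) μ c = (√(1 - 2 * c))⁻¹ := by
  rw [← mgf_sq_gaussianReal c, ← hlaw, mgf_map hX (by fun_prop)]
  rfl

lemma integrable_exp_mul_sq_of_map_eq_gaussianReal [IsProbabilityMeasure μ]
    (hX : AEMeasurable X μ) (hlaw : μ.map X = gaussianReal 0 1) {c : ℝ} (hc : c < 1 / 2) :
    Integrable (fun ω ↦ exp (c * X ω ^ 2)) μ := by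
  refine mgf_pos_iff.mp ?_
  rw [mgf_sq_of_map_eq_gaussianReal hX hlaw c]
  have : 0 < 1 - 2 * c := by linarith
  positivity

end

lemma rpow_neg_le_one_sub_mul_div {a t : ℝ} (ha0 : 0 ≤ a) (ha1 : a ≤ 1) (ht : 0 < t) :
    (1 + t) ^ (-a) ≤ 1 - a * (t / (1 + t)) := by
  have h := rpow_one_add_le_one_add_mul_self (s := -(t / (1 + t))) (by
    rw [neg_le_neg_iff, div_le_one (by linarith)]; linarith) ha0 ha1
  have h1 : 1 + -(t / (1 + t)) = (1 + t)⁻¹ := by field_simp; ring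
  rw [h1, inv_rpow (by linarith), ← rpow_neg (by linarith)] at h
  linarith

lemma inv_sqrt_one_sub_mul_div_le_rpow {a t : ℝ} (ha0 : 0 ≤ a) (ha1 : a ≤ 1) (ht : 0 < t) :
    (√(1 - a * (t / (1 + t))))⁻¹ ≤ (1 + t) ^ (a / 2) := by
  have hpos : 0 < (1 + t) ^ (-a) := by positivity
  have hle := rpow_neg_le_one_sub_mul_div ha0 ha1 ht
  rw [← sqrt_inv, ← sqrt_sq (by positivity : 0 ≤ (1 + t) ^ (a / 2)), ← rpow_natCast,
    ← rpow_mul (by linarith)]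
  apply sqrt_le_sqrt
  rwa [inv_le_comm₀ (hpos.trans_le hle) (by positivity), ← rpow_neg (by linarith),
    Nat.cast_ofNat, div_mul_cancel₀ a two_ne_zero]

lemma log_one_add_le_sub_sq_div_twelve {t : ℝ} (ht0 : 0 ≤ t) (ht1 : t ≤ 1) :
    log (1 + t) ≤ t - t ^ 2 / 12 := by
  rw [log_le_iff_le_exp (by linarith)]
  have hx : 0 ≤ t - t ^ 2 / 12 := by nlinarith
  nlinarith [quadratic_le_exp_of_nonneg hx]

section
variable {Ω ι : Type*} [MeasurableSpace Ω] {μ : Measure Ω} [IsProbabilityMeasure μ] [Fintype ι]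
  {θ : ι → Ω → ℝ}

theorem measureReal_sum_mul_sq_ge_le (hmeas : ∀ p, Measurable (θ p)) (hindep : iIndepFun θ μ)
    (hlaw : ∀ p, μ.map (θ p) = gaussianReal 0 1) {w : ι → ℝ} (hw0 : ∀ p, 0 ≤ w p)
    (hw1 : ∀ p, w p ≤ 1) {t : ℝ} (ht : 0 < t) :
    μ.real {ω | (1 + t) * ∑ p, w p ≤ ∑ p, w p * θ p ω ^ 2}
      ≤ exp (-(∑ p, w p) * (t - log (1 + t)) / 2) := by
  set s := t / (2 * (1 + t))
  have hs : 0 < s := by positivity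
  set X : ι → Ω → ℝ := fun p ω ↦ w p * θ p ω ^ 2
  have hXmeas : ∀ p, Measurable (X p) := fun p ↦ by fun_prop
  have hXindep : iIndepFun X μ := hindep.comp (fun p x ↦ w p * x ^ 2) (fun p ↦ by fun_prop)
  have hX p : Integrable (fun ω ↦ exp (s * X p ω)) μ ∧ mgf (X p) μ s ≤ (1 + t) ^ (w p / 2) := by
    have h2s : 2 * (s * w p) = w p * (t / (1 + t)) := by simp only [s]; field_simp
    have hsw : s * w p < 1 / 2 := by
      have := mul_le_of_le_one_left (div_pos ht (by linarith : (0 : ℝ) < 1 + t)).le (hw1 p)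
      have : t / (1 + t) < 1 := (div_lt_one (by linarith)).mpr (by linarith)
      linarith
    refine ⟨by simpa only [X, mul_assoc] using
      integrable_exp_mul_sq_of_map_eq_gaussianReal (hmeas p).aemeasurable (hlaw p) hsw, ?_⟩
    rw [mgf_const_mul, mul_comm, mgf_sq_of_map_eq_gaussianReal (hmeas p).aemeasurable (hlaw p), h2s]
    exact inv_sqrt_one_sub_mul_div_le_rpow (hw0 p) (hw1 p) ht
  have hevent : {ω | (1 + t) * ∑ p, w p ≤ ∑ p, w p * θ p ω ^ 2}
      = {ω | (1 + t) * ∑ p, w p ≤ (∑ p, X p) ω} := by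
    simp only [X, Finset.sum_apply]
  calc μ.real {ω | (1 + t) * ∑ p, w p ≤ ∑ p, w p * θ p ω ^ 2}
      ≤ exp (-s * ((1 + t) * ∑ p, w p)) * mgf (∑ p, X p) μ s := hevent ▸
        measure_ge_le_exp_mul_mgf _ hs.le (hXindep.integrable_exp_mul_sum hXmeas fun p _ ↦ (hX p).1)
    _ = exp (-s * ((1 + t) * ∑ p, w p)) * ∏ p, mgf (X p) μ s := by rw [hXindep.mgf_sum hXmeas]
    _ ≤ exp (-s * ((1 + t) * ∑ p, w p)) * ∏ p, (1 + t) ^ (w p / 2) := by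
        gcongr with p
        exacts [fun p _ ↦ mgf_nonneg, (hX p).2]
    _ = exp (-(∑ p, w p) * (t - log (1 + t)) / 2) := by
        rw [← rpow_sum_of_pos (by linarith), rpow_def_of_pos (by linarith), ← exp_add,
          ← Finset.sum_div]
        congr 1
        simp only [s]
        field_simp
        ring

end

theorem stmt_7_general {m d : ℕ} (hm : 0 < m)
    {Ω : Type*} [MeasureSpace Ω] [IsProbabilityMeasure (ℙ : Measure Ω)]
    (θ : Fin m × Fin d → Ω → ℝ)
    (hθmeas : ∀ ij, Measurable (θ ij))
    (hθindep : iIndepFun θ ℙ)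
    (hθlaw : ∀ ij, Measure.map (θ ij) ℙ = gaussianReal 0 1)
    (lam : Fin d → ℝ) (hlam : ∀ j, 0 ≤ lam j) (hlampos : 0 < ∑ j, lam j)
    (t : ℝ) (ht0 : 0 < t) (ht1 : t < 1) :
    (ℙ {ω | (1 + t) * ∑ j, lam j <
        (1 / (m : ℝ)) * ∑ i : Fin m, ∑ j : Fin d, lam j * (θ (i, j) ω) ^ 2}).toReal ≤
      Real.exp (-((m : ℝ) * t ^ 2) / 24) := by
  set Λ := ∑ j, lam j
  set w : Fin m × Fin d → ℝ := fun p ↦ lam p.2 / Λ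
  have hw0 p : 0 ≤ w p := div_nonneg (hlam p.2) hlampos.le
  have hw1 p : w p ≤ 1 :=
    (div_le_one hlampos).mpr (Finset.single_le_sum (fun j _ ↦ hlam j) (Finset.mem_univ p.2))
  have hwsum : ∑ p, w p = m := by
    simp only [w, Fintype.sum_prod_type, ← Finset.sum_div, Finset.sum_const, Finset.card_univ,
      Fintype.card_fin, nsmul_eq_mul]
    exact mul_div_cancel_right₀ _ hlampos.ne'
  have hmR : (0 : ℝ) < m := Nat.cast_pos.mpr hm
  have hevent : {ω | (1 + t) * Λ <
        (1 / (m : ℝ)) * ∑ i : Fin m, ∑ j : Fin d, lam j * (θ (i, j) ω) ^ 2}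
      ⊆ {ω | (1 + t) * ∑ p, w p ≤ ∑ p, w p * θ p ω ^ 2} := by
    intro ω hω
    simp only [Set.mem_ofPred_eq, hwsum, Fintype.sum_prod_type, w, div_mul_eq_mul_div,
      ← Finset.sum_div] at hω ⊢
    rw [one_mul, lt_div_iff₀ hmR] at hω
    rw [le_div_iff₀ hlampos]
    linarith
  calc (ℙ _).toReal
      ≤ (ℙ : Measure Ω).real {ω | (1 + t) * ∑ p, w p ≤ ∑ p, w p * θ p ω ^ 2} :=
        measureReal_mono hevent
    _ ≤ exp (-(m : ℝ) * (t - log (1 + t)) / 2) := by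
        simpa only [hwsum] using measureReal_sum_mul_sq_ge_le hθmeas hθindep hθlaw hw0 hw1 ht0
    _ ≤ exp (-((m : ℝ) * t ^ 2) / 24) := by
        refine exp_le_exp.mpr ?_
        nlinarith [mul_le_mul_of_nonneg_left (log_one_add_le_sub_sq_div_twelve ht0.le ht1.le) hmR.le]

/-- Chernoff bound used in the proof of Theorem 4. -/
theorem stmt_7 {m d : ℕ} (hm : 0 < m) (hd : 0 < d)
    {Ω : Type*} [MeasureSpace Ω] [IsProbabilityMeasure (ℙ : Measure Ω)]
    (θ : Fin m × Fin d → Ω → ℝ)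
    (hθmeas : ∀ ij, Measurable (θ ij))
    (hθindep : iIndepFun θ ℙ)
    (hθlaw : ∀ ij, Measure.map (θ ij) ℙ = gaussianReal 0 1)
    (lam : Fin d → ℝ) (hlam : ∀ j, 0 ≤ lam j) (hlampos : 0 < ∑ j, lam j)
    (t : ℝ) (ht0 : 0 < t) (ht1 : t < 1) :
    (ℙ {ω | (1 + t) * ∑ j, lam j <
        (1 / (m : ℝ)) * ∑ i : Fin m, ∑ j : Fin d, lam j * (θ (i, j) ω) ^ 2}).toReal ≤
      Real.exp (-((m : ℝ) * t ^ 2) / 24) :=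
  stmt_7_general hm θ hθmeas hθindep hθlaw lam hlam hlampos t ht0 ht1
end
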